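/- Two finite trees (connected acyclic finite simple graphs) are degree similar if and only if they are isomorphic. -/

import Mathlib

open Matrix

open Classical in
noncomputable def adjMat {V : Type*} (G : SimpleGraph V) : Matrix V V ℝ :=
  Matrix.of fun a b => if G.Adj a b then 1 else 0

noncomputable def gdeg {V : Type*} (G : SimpleGraph V) (v : V) : ℕ :=
  Nat.card (G.neighborSet v)

noncomputable def degMat {V : Type*} [DecidableEq V] (G : SimpleGraph V) : Matrix V V ℝ :=
  Matrix.diagonal fun v => (gdeg G v : ℝ)

/-- Two graphs (on possibly different vertex types of the same cardinality) are
degree similar if there is an invertible real matrix conjugating the adjacency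
matrix of the first to that of the second, and likewise for the degree matrices. -/
def DegreeSimilar {V W : Type*} [Fintype V] [Fintype W] [DecidableEq V] [DecidableEq W]
    (G : SimpleGraph V) (H : SimpleGraph W) : Prop :=
  ∃ (e : V ≃ W) (M : Matrix V V ℝ), IsUnit M ∧
    M⁻¹ * adjMat G * M = (adjMat H).submatrix ⇑e ⇑e ∧
    M⁻¹ * degMat G * M = (degMat H).submatrix ⇑e ⇑e

/-!
A degree similarity yields an invertible real matrix `M` with `A M = M A'` whose support only
joins vertices of equal degree. If `S` is a set of leaves, `A · diag(1_S) · A` is the diagonal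
matrix counting neighbours in `S`, and it is intertwined by `M` as well; so `M` only joins
vertices with the same number of leaf neighbours of each kind. In particular `M` is block
diagonal with respect to leaves and non-leaves, and its non-leaf block intertwines the trees
obtained by deleting all leaves. By induction on the number of vertices, with vertex labels that
record these leaf counts, the pruned trees are isomorphic by a label-preserving map, and it
extends to the leaves by matching leaves with the same neighbour and label.
-/

lemma sum_subtype_eq_sum_of_forall_not {ι M : Type*} [Fintype ι] [AddCommMonoid M]
    {p : ι → Prop} [Fintype (Subtype p)] (f : ι → M) (h : ∀ i, ¬ p i → f i = 0) :
    ∑ i : Subtype p, f i = ∑ i, f i := by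
  classical
  rw [← Finset.sum_subtype (Finset.univ.filter p) (by simp) f]
  exact Finset.sum_filter_of_ne fun i _ hi => by_contra fun hpi => hi (h i hpi)

lemma exists_equiv_forall_eq_of_card_fiber {α α' β : Type*} [Finite α] [Finite α']
    {f : α → β} {f' : α' → β} (h : ∀ b, Nat.card {a // f a = b} = Nat.card {a // f' a = b}) :
    ∃ ψ : α ≃ α', ∀ a, f' (ψ a) = f a :=
  ⟨Equiv.ofFiberEquiv fun b => (Finite.card_eq.mp (h b)).some, Equiv.ofFiberEquiv_map _⟩

namespace Matrix

variable {m n R : Type*}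

def RespectsLabels [Zero R] (M : Matrix m n R) {Λ : Type*} (f : m → Λ) (f' : n → Λ) : Prop :=
  ∀ i j, M i j ≠ 0 → f i = f' j

namespace RespectsLabels

variable [Zero R] {M : Matrix m n R} {Λ Λ' : Type*} {f : m → Λ} {f' : n → Λ}

lemma comp (h : M.RespectsLabels f f') (k : Λ → Λ') : M.RespectsLabels (k ∘ f) (k ∘ f') :=
  fun i j hij => congrArg k (h i j hij)

lemma of_comp {k : Λ → Λ'} (hk : Function.Injective k)
    (h : M.RespectsLabels (k ∘ f) (k ∘ f')) : M.RespectsLabels f f' :=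
  fun i j hij => hk (h i j hij)

lemma prodMk {g : m → Λ'} {g' : n → Λ'} (hf : M.RespectsLabels f f')
    (hg : M.RespectsLabels g g') : M.RespectsLabels (fun i => (f i, g i)) (fun j => (f' j, g' j)) :=
  fun i j hij => Prod.ext (hf i j hij) (hg i j hij)

lemma submatrix {m' n' : Type*} (h : M.RespectsLabels f f') (r : m' → m) (c : n' → n) :
    (M.submatrix r c).RespectsLabels (f ∘ r) (f' ∘ c) :=
  fun i j hij => h (r i) (c j) hij

lemma apply_eq_zero (h : M.RespectsLabels f f') {i : m} {j : n} (hij : f i ≠ f' j) : M i j = 0 :=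
  by_contra fun h0 => hij (h i j h0)

lemma indicator [One R] {N : Matrix m n R} {S : Set m} {S' : Set n}
    (h : N.RespectsLabels (· ∈ S) (· ∈ S')) :
    N.RespectsLabels (S.indicator (1 : m → R)) (S'.indicator 1) := by
  intro i j hij
  classical
  simp only [Set.indicator_apply]
  exact if_congr (Iff.of_eq (h i j hij)) rfl rfl

end RespectsLabels

lemma respectsLabels_iff_diagonal_mul_eq [DecidableEq m] [DecidableEq n] [Fintype m] [Fintype n]
    [CommRing R] [IsDomain R] (M : Matrix m n R) (d : m → R) (d' : n → R) :
    M.RespectsLabels d d' ↔ diagonal d * M = M * diagonal d' := by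
  simp only [RespectsLabels, ← Matrix.ext_iff, diagonal_mul, mul_diagonal, mul_comm (d _),
    mul_eq_mul_left_iff, or_iff_not_imp_left]
  exact forall₂_congr fun _ _ => not_imp_comm

lemma exists_equiv_forall_apply_ne_zero [Fintype m] [Fintype n] [DecidableEq m] [DecidableEq n]
    [CommRing R] [Nontrivial R] {M : Matrix m n R} {N : Matrix n m R} (hMN : M * N = 1)
    (hNM : N * M = 1) : ∃ e : m ≃ n, ∀ i, M i (e i) ≠ 0 := by
  obtain ⟨e₀⟩ := Fintype.card_eq.mp (square_of_invertible M N hMN hNM)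
  have hdet : (M.submatrix id e₀).det ≠ 0 := by
    intro h0
    have := congrArg det (submatrix_mul_equiv M N id e₀ id)
    rw [det_mul, h0, zero_mul, hMN, submatrix_id_id, det_one] at this
    exact zero_ne_one this
  rw [det_apply] at hdet
  obtain ⟨σ, -, hσ⟩ := Finset.exists_ne_zero_of_sum_ne_zero hdet
  have hprod : ∀ i, M.submatrix id e₀ (σ i) i ≠ 0 := fun i h =>
    hσ (by rw [Finset.prod_eq_zero (f := fun j => M.submatrix id e₀ (σ j) j)
      (Finset.mem_univ i) h, smul_zero])
  refine ⟨σ.symm.trans e₀, fun i => ?_⟩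
  simpa using hprod (σ.symm i)

namespace RespectsLabels

variable {p : m → Prop} {q : n → Prop}

section

variable [NonUnitalNonAssocSemiring R] {M : Matrix m n R}

lemma submatrix_val_mul_submatrix [Fintype n] [Fintype (Subtype q)] {o o' : Type*}
    (h : M.RespectsLabels p q) (N : Matrix n o R) (g : o' → o) :
    (M.submatrix Subtype.val Subtype.val : Matrix (Subtype p) (Subtype q) R)
        * (N.submatrix Subtype.val g : Matrix (Subtype q) o' R)
      = (M * N).submatrix Subtype.val g := by
  ext i k
  refine sum_subtype_eq_sum_of_forall_not (fun j => M i j * N j (g k)) fun j hj => ?_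
  rw [h.apply_eq_zero fun e => hj (e ▸ i.2), zero_mul]

lemma submatrix_mul_submatrix_val [Fintype m] [Fintype (Subtype p)] {o o' : Type*}
    (h : M.RespectsLabels p q) (N : Matrix o m R) (f : o' → o) :
    (N.submatrix f Subtype.val : Matrix o' (Subtype p) R)
        * (M.submatrix Subtype.val Subtype.val : Matrix (Subtype p) (Subtype q) R)
      = (N * M).submatrix f Subtype.val := by
  ext k j
  refine sum_subtype_eq_sum_of_forall_not (fun i => N (f k) i * M i j) fun i hi => ?_
  rw [h.apply_eq_zero fun e => hi (e ▸ j.2), mul_zero]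

end

lemma submatrix_mul_submatrix_eq_one [Fintype m] [Fintype n] [Fintype (Subtype p)]
    [Fintype (Subtype q)] [DecidableEq m] [DecidableEq n] [NonAssocSemiring R]
    {M : Matrix m n R} {N : Matrix n m R} (h : M.RespectsLabels p q) (hMN : M * N = 1)
    (hNM : N * M = 1) :
    (M.submatrix Subtype.val Subtype.val : Matrix (Subtype p) (Subtype q) R)
        * (N.submatrix Subtype.val Subtype.val : Matrix (Subtype q) (Subtype p) R) = 1 ∧
      (N.submatrix Subtype.val Subtype.val : Matrix (Subtype q) (Subtype p) R)
        * (M.submatrix Subtype.val Subtype.val : Matrix (Subtype p) (Subtype q) R) = 1 := by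
  rw [h.submatrix_val_mul_submatrix, h.submatrix_mul_submatrix_val, hMN, hNM,
    submatrix_one _ Subtype.val_injective, submatrix_one _ Subtype.val_injective]
  exact ⟨rfl, rfl⟩

end RespectsLabels

lemma mul_submatrix_symm_eq_of_inv_mul_mul_eq {V W R : Type*} [Fintype V] [Fintype W]
    [DecidableEq V] [CommRing R] {M X : Matrix V V R} {Y : Matrix W W R} (e : V ≃ W)
    (hM : IsUnit M) (h : M⁻¹ * X * M = Y.submatrix e e) :
    X * M.submatrix id e.symm = M.submatrix id e.symm * Y := by
  have hXM : X * M = M * Y.submatrix e e := by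
    rw [← h, Matrix.mul_assoc, mul_nonsing_inv_cancel_left _ _ ((isUnit_iff_isUnit_det M).mp hM)]
  calc X * M.submatrix id e.symm = (X * M).submatrix id e.symm := by
        simpa using submatrix_mul_equiv X M id (Equiv.refl V) e.symm
    _ = M.submatrix id e.symm * Y := by
        rw [hXM, ← submatrix_mul_equiv M _ id e.symm e.symm, submatrix_submatrix,
          Equiv.self_comp_symm, submatrix_id_id]

end Matrix

namespace SimpleGraph

variable {V V' Λ : Type*}

def leaves (G : SimpleGraph V) : Set V := {v | gdeg G v = 1}

abbrev prune (G : SimpleGraph V) : SimpleGraph ↥G.leavesᶜ := G.induce G.leavesᶜ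

noncomputable def leafCount (G : SimpleGraph V) (g : V → Λ) (u : V) (γ : Λ) : ℕ :=
  (G.neighborSet u ∩ (G.leaves ∩ g ⁻¹' {γ})).ncard

variable {G : SimpleGraph V}

lemma gdeg_eq_ncard (v : V) : gdeg G v = (G.neighborSet v).ncard :=
  Nat.card_coe_set_eq _

lemma gdeg_eq_degree (v : V) [Fintype (G.neighborSet v)] : gdeg G v = G.degree v := by
  rw [gdeg, Nat.card_eq_fintype_card, card_neighborSet_eq_degree]

lemma Iso.gdeg_apply {G' : SimpleGraph V'} (φ : G ≃g G') (v : V) : gdeg G' (φ v) = gdeg G v :=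
  Nat.card_congr (φ.mapNeighborSet v).symm

lemma adjMat_induce (s : Set V) :
    adjMat (G.induce s) = (adjMat G).submatrix Subtype.val Subtype.val :=
  rfl

lemma exists_neighborSet_eq_singleton {l : V} (hl : l ∈ G.leaves) :
    ∃ a, G.neighborSet l = {a} :=
  Set.ncard_eq_one.mp ((gdeg_eq_ncard l).symm.trans hl)

noncomputable def leafNeighbor {l : V} (hl : l ∈ G.leaves) : V :=
  (exists_neighborSet_eq_singleton hl).choose

lemma adj_iff_eq_leafNeighbor {l w : V} (hl : l ∈ G.leaves) :
    G.Adj l w ↔ w = G.leafNeighbor hl := by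
  rw [← mem_neighborSet, (exists_neighborSet_eq_singleton hl).choose_spec, Set.mem_singleton_iff]
  rfl

lemma adj_leafNeighbor {l : V} (hl : l ∈ G.leaves) : G.Adj l (G.leafNeighbor hl) :=
  (adj_iff_eq_leafNeighbor hl).mpr rfl

lemma eq_of_adj_of_adj_of_mem_leaves {l u w : V} (hl : l ∈ G.leaves) (hu : G.Adj l u)
    (hw : G.Adj l w) : u = w :=
  ((adj_iff_eq_leafNeighbor hl).mp hu).trans ((adj_iff_eq_leafNeighbor hl).mp hw).symm

lemma gdeg_prune_add_ncard_inter_leaves [Finite V] (u : ↥G.leavesᶜ) :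
    gdeg G.prune u + (G.neighborSet u ∩ G.leaves).ncard = gdeg G u := by
  have hprune : gdeg G.prune u = (G.neighborSet u \ G.leaves).ncard := by
    rw [gdeg_eq_ncard, ← Set.ncard_image_of_injective _ Subtype.val_injective]
    congr 1
    ext w
    simp [and_comm]
  rw [hprune, add_comm, Set.ncard_inter_add_ncard_sdiff_eq_ncard, gdeg_eq_ncard]

lemma Walk.IsPath.two_le_gdeg [Finite V] {u v w : V} {p : G.Walk u v} (hp : p.IsPath)
    (hw : w ∈ p.support) (hwu : w ≠ u) (hwv : w ≠ v) : 2 ≤ gdeg G w := by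
  obtain ⟨i, rfl, hi⟩ := p.mem_support_iff_exists_getVert.mp hw
  have hi0 : i ≠ 0 := by rintro rfl; exact hwu p.getVert_zero
  have hil : i < p.length := hi.lt_of_ne fun h => hwv (h ▸ p.getVert_length)
  rw [← hp.ncard_neighborSet_toSubgraph_internal_eq_two hi0 hil, gdeg_eq_ncard]
  exact Set.ncard_le_ncard (p.toSubgraph.neighborSet_subset _)

lemma Connected.adj_iff_ne_of_card_le_two [Fintype V] (hc : G.Connected)
    (h2 : Fintype.card V ≤ 2) {u v : V} : G.Adj u v ↔ u ≠ v := by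
  refine ⟨Adj.ne, fun huv => ?_⟩
  obtain ⟨d, -, hd, hd'⟩ := (hc u v).some.exists_boundary_dart {u} rfl huv.symm
  rw [Set.mem_singleton_iff] at hd hd'
  have hdv : d.snd = v := by
    by_contra hdv
    have := Fintype.two_lt_card_iff.mpr ⟨u, v, d.snd, huv, Ne.symm hd', Ne.symm hdv⟩
    omega
  exact hd ▸ hdv ▸ d.adj

section Tree

variable [Fintype V]

lemma IsTree.not_adj_of_mem_leaves (hT : G.IsTree) (h3 : 3 ≤ Fintype.card V) {l m : V}
    (hl : l ∈ G.leaves) (hm : m ∈ G.leaves) : ¬ G.Adj l m := by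
  classical
  intro hlm
  have hclosed : ∀ v, v ∈ ({l, m} : Finset V) := by
    intro v
    by_contra hv
    obtain ⟨d, -, hd, hd'⟩ := (hT.connected l v).some.exists_boundary_dart {l, m} (by simp)
      (by simpa using hv)
    simp only [Set.mem_insert_iff, Set.mem_singleton_iff, not_or] at hd hd'
    rcases hd with hd | hd
    · exact hd'.2 (eq_of_adj_of_adj_of_mem_leaves hl (hd ▸ d.adj) hlm)
    · exact hd'.1 (eq_of_adj_of_adj_of_mem_leaves hm (hd ▸ d.adj) hlm.symm)
  have : Fintype.card V ≤ 2 :=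
    (Finset.card_le_card fun v (_ : v ∈ Finset.univ) => hclosed v).trans Finset.card_le_two
  omega

lemma IsTree.leafNeighbor_notMem_leaves (hT : G.IsTree) (h3 : 3 ≤ Fintype.card V) {l : V}
    (hl : l ∈ G.leaves) : G.leafNeighbor hl ∉ G.leaves :=
  fun h => hT.not_adj_of_mem_leaves h3 hl h (adj_leafNeighbor hl)

lemma IsTree.exists_mem_leaves (hT : G.IsTree) (h2 : 2 ≤ Fintype.card V) :
    ∃ l, l ∈ G.leaves := by
  classical
  have : Nontrivial V := Fintype.one_lt_card_iff_nontrivial.mp h2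
  obtain ⟨v, hv⟩ := hT.exists_vert_degree_one_of_nontrivial
  exact ⟨v, (gdeg_eq_degree v).trans hv⟩

lemma IsTree.prune (hT : G.IsTree) (h3 : 3 ≤ Fintype.card V) : G.prune.IsTree := by
  obtain ⟨l, hl⟩ := hT.exists_mem_leaves (by omega)
  have : Nonempty ↥G.leavesᶜ := ⟨⟨_, hT.leafNeighbor_notMem_leaves h3 hl⟩⟩
  refine ⟨⟨fun u v => ?_⟩, hT.isAcyclic.induce _⟩
  obtain ⟨p, hp⟩ := hT.connected.exists_isPath u v
  refine ⟨p.induce _ fun w hw => ?_⟩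
  by_cases hwu : w = u
  · exact hwu ▸ u.2
  by_cases hwv : w = v
  · exact hwv ▸ v.2
  have := hp.two_le_gdeg hw hwu hwv
  exact fun h : gdeg G w = 1 => by omega

end Tree

lemma adjMat_mul_diagonal_indicator_mul_adjMat [Fintype V] [DecidableEq V] {S : Set V}
    (hS : S ⊆ G.leaves) :
    adjMat G * diagonal (S.indicator 1) * adjMat G
      = diagonal fun u => ((G.neighborSet u ∩ S).ncard : ℝ) := by
  classical
  ext u w
  have hterm : ∀ l, (adjMat G * diagonal (S.indicator 1) : Matrix V V ℝ) u l * adjMat G l w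
      = if l ∈ G.neighborSet u ∩ S ∧ u = w then 1 else 0 := by
    intro l
    by_cases hul : G.Adj u l
    · by_cases hlS : l ∈ S
      · have hlw : G.Adj l w ↔ u = w :=
          ⟨eq_of_adj_of_adj_of_mem_leaves (hS hlS) hul.symm, fun h => h ▸ hul.symm⟩
        simp [adjMat, hul, hlS, hlw]
      · simp [adjMat, hlS]
    · simp [adjMat, hul]
  rw [mul_apply, Finset.sum_congr rfl fun l _ => hterm l, diagonal_apply]
  by_cases huw : u = w
  · simp only [huw, and_true, Finset.sum_boole, Set.ncard_eq_toFinset_card', Set.toFinset_inter]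
    congr 2
    ext
    simp
  · simp [huw]

lemma card_leafNeighbor_fiber (g : V → Λ) (r : V) (γ : Λ) :
    Nat.card {l : G.leaves // (G.leafNeighbor l.2, g l) = (r, γ)} = G.leafCount g r γ := by
  rw [leafCount, ← Nat.card_coe_set_eq]
  refine Nat.card_congr ((Equiv.subtypeSubtypeEquivSubtypeExists _ _).trans
    (Equiv.subtypeEquivRight fun v => ?_))
  simp only [Prod.mk.injEq, Set.mem_inter_iff, mem_neighborSet, Set.mem_preimage,
    Set.mem_singleton_iff]
  constructor
  · rintro ⟨hl, hr, rfl⟩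
    exact ⟨((adj_iff_eq_leafNeighbor hl).mpr hr.symm).symm, hl, rfl⟩
  · rintro ⟨hadj, hl, rfl⟩
    exact ⟨hl, ((adj_iff_eq_leafNeighbor hl).mp hadj.symm).symm, rfl⟩

section Extension

variable [Fintype V] [Fintype V'] {T : SimpleGraph V} {T' : SimpleGraph V'} (hT : T.IsTree)
  (hT' : T'.IsTree) (h3 : 3 ≤ Fintype.card V) (h3' : 3 ≤ Fintype.card V')
  (φ₂ : T.prune ≃g T'.prune)
include hT hT' h3 h3'

lemma IsTree.exists_leaves_equiv {g : V → Λ} {g' : V' → Λ}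
    (hcount : ∀ a, T'.leafCount g' (φ₂ a) = T.leafCount g a) :
    ∃ ψ : T.leaves ≃ T'.leaves, ∀ l,
      T'.leafNeighbor (ψ l).2 = φ₂ ⟨T.leafNeighbor l.2, hT.leafNeighbor_notMem_leaves h3 l.2⟩ ∧
        g' (ψ l) = g l := by
  let key : T.leaves → ↥T'.leavesᶜ × Λ := fun l =>
    (φ₂ ⟨T.leafNeighbor l.2, hT.leafNeighbor_notMem_leaves h3 l.2⟩, g l)
  let key' : T'.leaves → ↥T'.leavesᶜ × Λ := fun l =>
    (⟨T'.leafNeighbor l.2, hT'.leafNeighbor_notMem_leaves h3' l.2⟩, g' l)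
  obtain ⟨ψ, hψ⟩ := exists_equiv_forall_eq_of_card_fiber (f := key) (f' := key') fun ⟨r, γ⟩ =>
    calc Nat.card {l // key l = (r, γ)} = T.leafCount g (φ₂.symm r) γ := by
          rw [← card_leafNeighbor_fiber]
          exact Nat.card_congr (Equiv.subtypeEquivRight fun l => by
            simp only [key, Prod.mk.injEq, ← RelIso.eq_symm_apply, Subtype.ext_iff])
      _ = T'.leafCount g' r γ := by rw [← hcount, RelIso.apply_symm_apply]
      _ = Nat.card {l // key' l = (r, γ)} := by
          rw [← card_leafNeighbor_fiber]
          exact Nat.card_congr (Equiv.subtypeEquivRight fun l => by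
            simp only [key', Prod.mk.injEq, Subtype.ext_iff])
  exact ⟨ψ, fun l =>
    ⟨congrArg Subtype.val (congrArg Prod.fst (hψ l)), congrArg Prod.snd (hψ l)⟩⟩

lemma IsTree.exists_iso_of_prune_iso_of_leaves_equiv (ψ : T.leaves ≃ T'.leaves)
    (hψ : ∀ l, T'.leafNeighbor (ψ l).2
      = φ₂ ⟨T.leafNeighbor l.2, hT.leafNeighbor_notMem_leaves h3 l.2⟩) :
    ∃ φ : T ≃g T', (∀ u (hu : u ∈ T.leaves), φ u = ψ ⟨u, hu⟩) ∧
      ∀ u (hu : u ∈ T.leavesᶜ), φ u = φ₂ ⟨u, hu⟩ := by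
  classical
  let φ : V ≃ V' := (Equiv.sumCompl (· ∈ T.leaves)).symm.trans
    ((ψ.sumCongr φ₂.toEquiv).trans (Equiv.sumCompl (· ∈ T'.leaves)))
  have hφl : ∀ u (hu : u ∈ T.leaves), φ u = ψ ⟨u, hu⟩ := fun u hu => by
    simp [φ, Equiv.sumCompl_symm_apply_of_pos hu]
    rfl
  have hφa : ∀ u (hu : u ∈ T.leavesᶜ), φ u = φ₂ ⟨u, hu⟩ := fun u hu => by
    simp [φ, Equiv.sumCompl_symm_apply_of_neg hu]
    rfl
  have hmixed : ∀ u v (hu : u ∈ T.leaves) (hv : v ∈ T.leavesᶜ),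
      T'.Adj (φ u) (φ v) ↔ T.Adj u v := by
    intro u v hu hv
    rw [hφl u hu, hφa v hv, adj_iff_eq_leafNeighbor (ψ _).2, adj_iff_eq_leafNeighbor hu, hψ,
      ← Subtype.ext_iff, φ₂.injective.eq_iff, Subtype.ext_iff]
  refine ⟨⟨φ, fun {u v} => ?_⟩, hφl, hφa⟩
  by_cases hu : u ∈ T.leaves <;> by_cases hv : v ∈ T.leaves
  · refine iff_of_false (hT'.not_adj_of_mem_leaves h3' ?_ ?_) (hT.not_adj_of_mem_leaves h3 hu hv)
    · exact hφl u hu ▸ (ψ _).2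
    · exact hφl v hv ▸ (ψ _).2
  · exact hmixed u v hu hv
  · rw [T.adj_comm, T'.adj_comm]
    exact hmixed v u hv hu
  · rw [hφa u hu, hφa v hv]
    exact φ₂.map_adj_iff

lemma IsTree.exists_iso_of_prune_iso {g : V → Λ} {g' : V' → Λ} (hg : ∀ a, g' (φ₂ a) = g a)
    (hcount : ∀ a, T'.leafCount g' (φ₂ a) = T.leafCount g a) :
    ∃ φ : T ≃g T', ∀ u, g' (φ u) = g u := by
  obtain ⟨ψ, hψ⟩ := hT.exists_leaves_equiv hT' h3 h3' φ₂ hcount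
  obtain ⟨φ, hφl, hφa⟩ :=
    hT.exists_iso_of_prune_iso_of_leaves_equiv hT' h3 h3' φ₂ ψ fun l => (hψ l).1
  refine ⟨φ, fun u => ?_⟩
  by_cases hu : u ∈ T.leaves
  · rw [hφl u hu]
    exact (hψ _).2
  · rw [hφa u hu]
    exact hg _

end Extension

end SimpleGraph

namespace Matrix.RespectsLabels

open SimpleGraph

variable {V V' : Type*} [Fintype V] [Fintype V'] {T : SimpleGraph V} {T' : SimpleGraph V'}
  {M : Matrix V V' ℝ}

lemma ncard_neighborSet_inter [DecidableEq V] [DecidableEq V']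
    (hA : adjMat T * M = M * adjMat T') {S : Set V} {S' : Set V'} (hS : S ⊆ T.leaves)
    (hS' : S' ⊆ T'.leaves) (h : M.RespectsLabels (· ∈ S) (· ∈ S')) :
    M.RespectsLabels (fun u => (T.neighborSet u ∩ S).ncard)
      (fun v => (T'.neighborSet v ∩ S').ncard) := by
  have hD := (respectsLabels_iff_diagonal_mul_eq M _ _).mp h.indicator
  refine of_comp (k := (Nat.cast : ℕ → ℝ)) Nat.cast_injective
    ((respectsLabels_iff_diagonal_mul_eq M _ _).mpr ?_)
  simp only [Function.comp_def]
  rw [← adjMat_mul_diagonal_indicator_mul_adjMat hS, ← adjMat_mul_diagonal_indicator_mul_adjMat hS',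
    Matrix.mul_assoc, hA, ← Matrix.mul_assoc, Matrix.mul_assoc (adjMat T), hD,
    ← Matrix.mul_assoc, hA]
  simp only [Matrix.mul_assoc]

lemma adjMat_prune_mul_submatrix [Fintype ↥T.leavesᶜ] [Fintype ↥T'.leavesᶜ]
    (h : M.RespectsLabels (· ∈ T.leavesᶜ) (· ∈ T'.leavesᶜ))
    (hA : adjMat T * M = M * adjMat T') :
    adjMat T.prune * (M.submatrix Subtype.val Subtype.val : Matrix ↥T.leavesᶜ ↥T'.leavesᶜ ℝ)
      = (M.submatrix Subtype.val Subtype.val : Matrix ↥T.leavesᶜ ↥T'.leavesᶜ ℝ)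
        * adjMat T'.prune := by
  rw [adjMat_induce, adjMat_induce, h.submatrix_mul_submatrix_val,
    h.submatrix_val_mul_submatrix, hA]

variable [DecidableEq V] [DecidableEq V'] (hA : adjMat T * M = M * adjMat T')
  (hdeg : M.RespectsLabels (gdeg T) (gdeg T'))
include hA hdeg

lemma leafCount {Λ : Type*} {g : V → Λ} {g' : V' → Λ} (hg : M.RespectsLabels g g') :
    M.RespectsLabels (T.leafCount g) (T'.leafCount g') := by
  intro u v huv
  funext γ
  have hS : M.RespectsLabels (· ∈ T.leaves ∩ g ⁻¹' {γ}) (· ∈ T'.leaves ∩ g' ⁻¹' {γ}) :=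
    fun i j hij => by
      simp only [Set.mem_inter_iff, leaves, Set.mem_ofPred_eq, Set.mem_preimage,
        Set.mem_singleton_iff, hdeg i j hij, hg i j hij]
  exact hS.ncard_neighborSet_inter hA Set.inter_subset_left Set.inter_subset_left u v huv

lemma gdeg_prune :
    (M.submatrix Subtype.val Subtype.val : Matrix ↥T.leavesᶜ ↥T'.leavesᶜ ℝ).RespectsLabels
      (gdeg T.prune) (gdeg T'.prune) := by
  have hleaf : M.RespectsLabels (· ∈ T.leaves) (· ∈ T'.leaves) := hdeg.comp (· = 1)
  have hcount := hleaf.ncard_neighborSet_inter hA subset_rfl subset_rfl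
  intro a b hab
  have := gdeg_prune_add_ncard_inter_leaves a
  have := gdeg_prune_add_ncard_inter_leaves b
  have := hdeg a b hab
  have : (T.neighborSet a ∩ T.leaves).ncard = (T'.neighborSet b ∩ T'.leaves).ncard :=
    hcount a b hab
  omega

end Matrix.RespectsLabels

namespace SimpleGraph

variable {V V' : Type*} [Fintype V] [Fintype V'] [DecidableEq V] [DecidableEq V']
  {T : SimpleGraph V} {T' : SimpleGraph V'} {M : Matrix V V' ℝ} {N : Matrix V' V ℝ}

lemma IsTree.exists_iso_of_card_le_two {Λ : Type*} {g : V → Λ} {g' : V' → Λ} (hT : T.IsTree)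
    (hT' : T'.IsTree) (h2 : Fintype.card V ≤ 2) (hMN : M * N = 1) (hNM : N * M = 1)
    (hg : M.RespectsLabels g g') : ∃ φ : T ≃g T', ∀ u, g' (φ u) = g u := by
  obtain ⟨e, he⟩ := exists_equiv_forall_apply_ne_zero hMN hNM
  have h2' : Fintype.card V' ≤ 2 := square_of_invertible M N hMN hNM ▸ h2
  refine ⟨⟨e, fun {u v} => ?_⟩, fun u => (hg u (e u) (he u)).symm⟩
  rw [hT'.connected.adj_iff_ne_of_card_le_two h2', hT.connected.adj_iff_ne_of_card_le_two h2,
    e.injective.ne_iff]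

theorem IsTree.exists_iso_of_adjMat_mul_eq {Λ : Type*} {g : V → Λ} {g' : V' → Λ}
    (hT : T.IsTree) (hT' : T'.IsTree) (hMN : M * N = 1) (hNM : N * M = 1)
    (hA : adjMat T * M = M * adjMat T') (hdeg : M.RespectsLabels (gdeg T) (gdeg T'))
    (hg : M.RespectsLabels g g') :
    ∃ φ : T ≃g T', ∀ u, g' (φ u) = g u := by
  induction hn : Fintype.card V using Nat.strong_induction_on generalizing V V' Λ with
  | _ n ih =>
  by_cases h2 : n ≤ 2
  · exact hT.exists_iso_of_card_le_two hT' (hn ▸ h2) hMN hNM hg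
  classical
  have h3 : 3 ≤ Fintype.card V := by omega
  have h3' : 3 ≤ Fintype.card V' := square_of_invertible M N hMN hNM ▸ h3
  have hleaf : M.RespectsLabels (· ∈ T.leavesᶜ) (· ∈ T'.leavesᶜ) := hdeg.comp (· ≠ 1)
  obtain ⟨l, hl⟩ := hT.exists_mem_leaves (by omega)
  obtain ⟨hMN₂, hNM₂⟩ := hleaf.submatrix_mul_submatrix_eq_one hMN hNM
  -- The pruned trees are labelled with the leaf counts, which say how to reattach the leaves.
  obtain ⟨φ₂, hφ₂⟩ := ih _ (hn ▸ Fintype.card_subtype_lt (not_not_intro hl)) (hT.prune h3)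
    (hT'.prune h3') hMN₂ hNM₂ (hleaf.adjMat_prune_mul_submatrix hA) (hdeg.gdeg_prune hA)
    ((hg.prodMk (hdeg.leafCount hA hg)).submatrix _ _) rfl
  exact hT.exists_iso_of_prune_iso hT' h3 h3' φ₂ (fun a => congrArg Prod.fst (hφ₂ a))
    (fun a => congrArg Prod.snd (hφ₂ a))

end SimpleGraph

section DegreeSimilar

variable {V W : Type*} [Fintype V] [Fintype W] [DecidableEq V] [DecidableEq W]
  {G : SimpleGraph V} {H : SimpleGraph W}

lemma DegreeSimilar.exists_intertwining (h : DegreeSimilar G H) :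
    ∃ (M : Matrix V W ℝ) (N : Matrix W V ℝ), M * N = 1 ∧ N * M = 1 ∧
      adjMat G * M = M * adjMat H ∧ M.RespectsLabels (gdeg G) (gdeg H) := by
  obtain ⟨e, M, hM, hA, hD⟩ := h
  have hdet := (isUnit_iff_isUnit_det M).mp hM
  refine ⟨M.submatrix id e.symm, M⁻¹.submatrix e.symm id, ?_, ?_,
    mul_submatrix_symm_eq_of_inv_mul_mul_eq e hM hA, ?_⟩
  · rw [submatrix_mul_equiv, mul_nonsing_inv _ hdet, submatrix_id_id]
  · rw [← submatrix_mul _ _ _ _ _ Function.bijective_id, nonsing_inv_mul _ hdet,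
      submatrix_one_equiv]
  · exact RespectsLabels.of_comp (k := (Nat.cast : ℕ → ℝ)) Nat.cast_injective
      ((respectsLabels_iff_diagonal_mul_eq _ _ _).mpr
        (mul_submatrix_symm_eq_of_inv_mul_mul_eq e hM hD))

lemma SimpleGraph.Iso.degreeSimilar (φ : G ≃g H) : DegreeSimilar G H := by
  refine ⟨φ.toEquiv, 1, isUnit_one, ?_, ?_⟩
  · rw [inv_one, Matrix.one_mul, Matrix.mul_one]
    ext u v
    classical
    exact if_congr φ.map_adj_iff.symm rfl rfl
  · rw [inv_one, Matrix.one_mul, Matrix.mul_one, degMat, degMat, submatrix_diagonal_equiv]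
    congr
    funext v
    simp [φ.gdeg_apply]

end DegreeSimilar

/-- Two finite trees are degree similar if and only if they are isomorphic. -/
theorem trees_degreeSimilar_iff_iso {V W : Type*} [Fintype V] [Fintype W]
    [DecidableEq V] [DecidableEq W] (G : SimpleGraph V) (H : SimpleGraph W)
    (hG : G.IsTree) (hH : H.IsTree) :
    DegreeSimilar G H ↔ Nonempty (G ≃g H) := by
  refine ⟨fun h => ?_, fun ⟨φ⟩ => φ.degreeSimilar⟩
  obtain ⟨M, N, hMN, hNM, hA, hdeg⟩ := h.exists_intertwining
  obtain ⟨φ, -⟩ := hG.exists_iso_of_adjMat_mul_eq hH hMN hNM hA hdeg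
    (g := fun _ => ()) (g' := fun _ => ()) fun _ _ _ => rfl
  exact ⟨φ⟩
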